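/- Let d ≥ 1, n ≥ 1 and let y_1, …, y_n ∈ ℝ^d be pairwise distinct with Σ_{j=1}^n ‖y_j‖² = n d. For a > 0, define T(a) = n (π/(a+1))^{d/2} · d/(2(a+1)) − 2 (2π/(2a+1))^{d/2} Σ_{j=1}^n (‖y_j‖²/(2a+1)) exp(−‖y_j‖²/(4a+2)) + (1/n) (π/a)^{d/2} Σ_{i,j=1}^n y_iᵀ y_j exp(−‖y_i − y_j‖²/(4a)). Then lim_{a→0⁺} (1/(n a^{d/2})) ( (a/π)^{d/2} T(a) − d ) = d/2 − 2^{d/2+1} (1/n) Σ_{j=1}^n ‖y_j‖² exp(−‖y_j‖²/2). -/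

import Mathlib

open MeasureTheory Real Filter

/-- Closed form of the weighted `L²`-test statistic `T_{n,a}` for the points
`y 1, …, y n ∈ ℝ^d` and weight parameter `a`. -/
noncomputable def Tstat (d n : ℕ) (y : Fin n → EuclideanSpace ℝ (Fin d)) (a : ℝ) : ℝ :=
  (n : ℝ) * (π / (a + 1)) ^ ((d : ℝ) / 2) * ((d : ℝ) / (2 * (a + 1)))
    - 2 * (2 * π / (2 * a + 1)) ^ ((d : ℝ) / 2)
        * ∑ j, ‖y j‖ ^ 2 / (2 * a + 1) * Real.exp (-‖y j‖ ^ 2 / (4 * a + 2))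
    + (n : ℝ)⁻¹ * (π / a) ^ ((d : ℝ) / 2)
        * ∑ i, ∑ j, (inner ℝ (y i) (y j) : ℝ) * Real.exp (-‖y i - y j‖ ^ 2 / (4 * a))

open Topology Finset

/-! After multiplying by `(a/π)^{d/2}`, the diagonal terms `i = j` of the double sum in `T(a)`
contribute exactly `n⁻¹ ∑ ‖y_i‖² = d`, which cancels the subtracted `d`. Dividing by `n a^{d/2}`,
the first two terms of `T(a)` become functions continuous at `a = 0`, while every off-diagonal
term carries the factor `a^{-d/2} exp (-‖y_i - y_j‖²/(4a))`, which tends to `0` because the points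
are distinct. -/

lemma tendsto_rpow_mul_exp_neg_div_nhdsGT_zero (p : ℝ) {c : ℝ} (hc : 0 < c) :
    Tendsto (fun a : ℝ => a ^ p * exp (-c / a)) (𝓝[>] 0) (𝓝 0) := by
  refine ((tendsto_rpow_mul_exp_neg_mul_atTop_nhds_zero (-p) c hc).comp
    tendsto_inv_nhdsGT_zero).congr' ?_
  filter_upwards [self_mem_nhdsWithin] with a (ha : 0 < a)
  rw [Function.comp_apply, inv_rpow ha.le, ← rpow_neg ha.le, neg_neg, neg_mul, ← div_eq_mul_inv,
    neg_div]

lemma sum_sum_inner_mul_exp_eq_sum_norm_sq_add {ι E : Type*} [Fintype ι] [DecidableEq ι]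
    [NormedAddCommGroup E] [InnerProductSpace ℝ E] (y : ι → E) (c : ℝ) :
    ∑ i, ∑ j, inner ℝ (y i) (y j) * exp (-‖y i - y j‖ ^ 2 / c) =
      ∑ i, ‖y i‖ ^ 2 +
        ∑ i, ∑ j ∈ univ.erase i, inner ℝ (y i) (y j) * exp (-‖y i - y j‖ ^ 2 / c) := by
  rw [← sum_add_distrib]
  refine sum_congr rfl fun i _ => ?_
  rw [← add_sum_erase _ _ (mem_univ i)]
  simp

lemma Tstat_rescaled_eq {d n : ℕ} (hn : (n : ℝ) ≠ 0) (y : Fin n → EuclideanSpace ℝ (Fin d))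
    (hnorm : ∑ j, ‖y j‖ ^ 2 = (n : ℝ) * d) {a : ℝ} (ha : 0 < a) :
    ((n : ℝ) * a ^ ((d : ℝ) / 2))⁻¹ * ((a / π) ^ ((d : ℝ) / 2) * Tstat d n y a - d) =
      (a + 1) ^ (-((d : ℝ) / 2)) * (d / (2 * (a + 1)))
        - 2 * (n : ℝ)⁻¹ * (2 / (2 * a + 1)) ^ ((d : ℝ) / 2)
          * ∑ j, ‖y j‖ ^ 2 / (2 * a + 1) * exp (-‖y j‖ ^ 2 / (4 * a + 2))
        + (n : ℝ)⁻¹ ^ 2 * ∑ i, ∑ j ∈ univ.erase i,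
          inner ℝ (y i) (y j) * (a ^ (-((d : ℝ) / 2)) * exp (-‖y i - y j‖ ^ 2 / (4 * a))) := by
  unfold Tstat
  set p : ℝ := (d : ℝ) / 2
  have ha1 : 0 < a + 1 := by linarith
  have ha2 : 0 < 2 * a + 1 := by linarith
  have hoff : ∀ c : ℝ,
      ∑ i, ∑ j ∈ univ.erase i, inner ℝ (y i) (y j) * (c * exp (-‖y i - y j‖ ^ 2 / (4 * a)))
        = c * ∑ i, ∑ j ∈ univ.erase i, inner ℝ (y i) (y j) * exp (-‖y i - y j‖ ^ 2 / (4 * a)) := by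
    intro c
    simp only [mul_sum]
    exact sum_congr rfl fun i _ => sum_congr rfl fun j _ => by ring
  rw [hoff, sum_sum_inner_mul_exp_eq_sum_norm_sq_add, hnorm]
  simp only [div_rpow ha.le pi_pos.le,
    div_rpow pi_pos.le ha1.le, div_rpow (by positivity : (0 : ℝ) ≤ 2 * π) ha2.le,
    mul_rpow zero_le_two pi_pos.le, div_rpow pi_pos.le ha.le, div_rpow zero_le_two ha2.le,
    rpow_neg ha1.le, rpow_neg ha.le]
  field_simp
  ring

lemma tendsto_sum_offDiag_inner_mul_rpow_mul_exp {ι E : Type*} [Fintype ι] [DecidableEq ι]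
    [NormedAddCommGroup E] [InnerProductSpace ℝ E] {y : ι → E} (hy : Function.Injective y)
    (p : ℝ) {c : ℝ} (hc : 0 < c) :
    Tendsto (fun a : ℝ => ∑ i, ∑ j ∈ univ.erase i,
        inner ℝ (y i) (y j) * (a ^ p * exp (-‖y i - y j‖ ^ 2 / (c * a)))) (𝓝[>] 0) (𝓝 0) := by
  rw [← sum_const_zero (s := (univ : Finset ι))]
  refine tendsto_finsetSum _ fun i _ => ?_
  rw [← sum_const_zero (s := univ.erase i)]
  refine tendsto_finsetSum _ fun j hj => ?_
  have hyij : 0 < ‖y i - y j‖ ^ 2 / c := by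
    have : y i ≠ y j := hy.ne (ne_of_mem_erase hj).symm
    positivity [sub_ne_zero.mpr this]
  simpa [div_mul_eq_div_div, neg_div] using
    (tendsto_rpow_mul_exp_neg_div_nhdsGT_zero p hyij).const_mul (inner ℝ (y i) (y j))

theorem Tstat_tendsto_kurtosis_zero_general
    (d n : ℕ) (hn : 1 ≤ n) (y : Fin n → EuclideanSpace ℝ (Fin d))
    (hdistinct : Function.Injective y)
    (hnorm : ∑ j, ‖y j‖ ^ 2 = (n : ℝ) * d) :
    Tendsto (fun a : ℝ =>
        ((n : ℝ) * a ^ ((d : ℝ) / 2))⁻¹ * ((a / π) ^ ((d : ℝ) / 2) * Tstat d n y a - d))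
      (nhdsWithin 0 (Set.Ioi 0))
      (nhds ((d : ℝ) / 2 -
        2 ^ ((d : ℝ) / 2 + 1) * ((n : ℝ)⁻¹ *
          ∑ j, ‖y j‖ ^ 2 * Real.exp (-‖y j‖ ^ 2 / 2)))) := by
  have hn' : (n : ℝ) ≠ 0 := by positivity
  have hsmooth : ContinuousAt (fun a : ℝ => (a + 1) ^ (-((d : ℝ) / 2)) * (d / (2 * (a + 1)))
      - 2 * (n : ℝ)⁻¹ * (2 / (2 * a + 1)) ^ ((d : ℝ) / 2)
        * ∑ j, ‖y j‖ ^ 2 / (2 * a + 1) * exp (-‖y j‖ ^ 2 / (4 * a + 2))) 0 := by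
    fun_prop (disch := norm_num)
  have hlim := (hsmooth.tendsto.mono_left nhdsWithin_le_nhds).add
    ((tendsto_sum_offDiag_inner_mul_rpow_mul_exp hdistinct (-((d : ℝ) / 2)) four_pos).const_mul
      ((n : ℝ)⁻¹ ^ 2))
  convert hlim.congr' ?_ using 2
  · norm_num [rpow_add]
    ring
  · filter_upwards [self_mem_nhdsWithin] with a ha
    exact (Tstat_rescaled_eq hn' y hnorm ha).symm

/-- Theorem 2.4. For pairwise distinct points with
`∑ ‖y_j‖² = n d`, as `a → 0⁺`,
`(n a^{d/2})⁻¹ ( (a/π)^{d/2} T_{n,a} - d ) → d/2 - 2^{d/2+1} n⁻¹ ∑ ‖y_j‖² e^{-‖y_j‖²/2}`. -/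
theorem Tstat_tendsto_kurtosis_zero
    (d n : ℕ) (hd : 1 ≤ d) (hn : 1 ≤ n) (y : Fin n → EuclideanSpace ℝ (Fin d))
    (hdistinct : Function.Injective y)
    (hnorm : ∑ j, ‖y j‖ ^ 2 = (n : ℝ) * d) :
    Tendsto (fun a : ℝ =>
        ((n : ℝ) * a ^ ((d : ℝ) / 2))⁻¹ * ((a / π) ^ ((d : ℝ) / 2) * Tstat d n y a - d))
      (nhdsWithin 0 (Set.Ioi 0))
      (nhds ((d : ℝ) / 2 -
        2 ^ ((d : ℝ) / 2 + 1) * ((n : ℝ)⁻¹ *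
          ∑ j, ‖y j‖ ^ 2 * Real.exp (-‖y j‖ ^ 2 / 2)))) :=
  Tstat_tendsto_kurtosis_zero_general d n hn y hdistinct hnorm
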